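/- arXiv:1404.4312 — 2 statements merged into one kernel-verified Lean document; each statement's English description precedes it below -/
import Mathlib

section
/- With B, critical values, and i(t,t') as above, the number of half-open intervals (t_k, t_j] in B equals i(t'',t_j) - i(t_k,t_j) - i(t'',t') + i(t_k,t') for any t'' with t_k < t'' < t_{k+1} and any t' with t_j < t' < t_{j+1}. -/
open Classical Multiset

noncomputable section

/-- The four kinds of intervals: closed-closed, closed-open, open-closed, open-open. -/
inductive BarKind : Type
  | cc | co | oc | oo
  deriving DecidableEq

/-- A real interval of one of the four types, with endpoints `a ≤ b`. -/
structure Bar : Type where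
  kind : BarKind
  a : ℝ
  b : ℝ

instance : DecidableEq Bar := Classical.decEq _

namespace Bar

/-- The underlying set of points of the interval. -/
def toSet (I : Bar) : Set ℝ :=
  match I.kind with
  | .cc => Set.Icc I.a I.b
  | .co => Set.Ico I.a I.b
  | .oc => Set.Ioc I.a I.b
  | .oo => Set.Ioo I.a I.b

/-- Nonemptiness condition: `a ≤ b` for closed intervals, `a < b` otherwise. -/
def Valid (I : Bar) : Prop :=
  match I.kind with
  | .cc => I.a ≤ I.b
  | _ => I.a < I.b

def rightOpen (I : Bar) : Prop := I.kind = .co ∨ I.kind = .oo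
def leftOpen (I : Bar) : Prop := I.kind = .oc ∨ I.kind = .oo
def leftClosed (I : Bar) : Prop := I.kind = .cc ∨ I.kind = .co

end Bar

/-- `i(t,t')`: the number of intervals of `B` containing `[t,t']`. -/
def icount (B : Multiset Bar) (t t' : ℝ) : ℕ :=
  countP (fun I => Set.Icc t t' ⊆ I.toSet) B

/-- `l(t)`: the number of intervals of `B` containing `t`. -/
def lcount (B : Multiset Bar) (t : ℝ) : ℕ :=
  countP (fun I => t ∈ I.toSet) B

/-- `l⁺(t;t')`: intervals of `B` containing `t` with open right endpoint `≤ t'`. -/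
def lplus (B : Multiset Bar) (t t' : ℝ) : ℕ :=
  countP (fun I => t ∈ I.toSet ∧ I.rightOpen ∧ I.b ≤ t') B

/-- `l⁻(t;t'')`: intervals of `B` containing `t` with open left endpoint `≥ t''`. -/
def lminus (B : Multiset Bar) (t t'' : ℝ) : ℕ :=
  countP (fun I => t ∈ I.toSet ∧ I.leftOpen ∧ t'' ≤ I.a) B

/-- `e(t;t',t'')`: open intervals `(a,b)` of `B` with `t'' ≤ a < t < b ≤ t'`. -/
def ecount (B : Multiset Bar) (t t' t'' : ℝ) : ℕ :=
  countP (fun I => I.kind = .oo ∧ t'' ≤ I.a ∧ I.a < t ∧ t < I.b ∧ I.b ≤ t') B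

/-- All endpoints of intervals of `B` lie among the critical values `t 0, …, t N`. -/
def endpointsIn (B : Multiset Bar) (t : ℕ → ℝ) (N : ℕ) : Prop :=
  ∀ I ∈ B, (∃ i ≤ N, I.a = t i) ∧ (∃ j ≤ N, I.b = t j)

/-!
Every interval is order-connected, so `[x, y] ⊆ I` just says that `x, y ∈ I`, and the
alternating sum of the four counts becomes, interval by interval, the indicator of
`[t'', t_j] ⊆ I ∧ t_k ∉ I ∧ t' ∉ I`. Since the endpoints of `I` are critical values while
`t''` and `t'` lie strictly between consecutive critical values, this condition pins down
`I = (t_k, t_j]`.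
-/

theorem Multiset.countP_eq_sub_sub_add {α : Type*} {p q r u v : α → Prop} [DecidablePred p]
    [DecidablePred q] [DecidablePred r] [DecidablePred u] [DecidablePred v] {s : Multiset α}
    (h : ∀ x ∈ s, (if p x then 1 else 0 : ℤ) =
      (if q x then 1 else 0) - (if r x then 1 else 0) - (if u x then 1 else 0)
        + (if v x then 1 else 0)) :
    (countP p s : ℤ) = countP q s - countP r s - countP u s + countP v s := by
  induction s using Multiset.induction_on with
  | empty => simp
  | cons x s ih =>
    have hx := h x (mem_cons_self x s)
    have hs := ih fun y hy => h y (mem_cons_of_mem hy)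
    simp only [countP_cons, Nat.cast_add, Nat.cast_ite, Nat.cast_one, Nat.cast_zero]
    linarith

section OrdConnected

variable {α : Type*} [Preorder α] {S : Set α}

theorem Set.OrdConnected.Icc_subset_iff (hS : S.OrdConnected) {x y : α} (hxy : x ≤ y) :
    Set.Icc x y ⊆ S ↔ x ∈ S ∧ y ∈ S :=
  ⟨fun h => ⟨h (Set.left_mem_Icc.2 hxy), h (Set.right_mem_Icc.2 hxy)⟩,
    fun h => hS.out h.1 h.2⟩

theorem Set.OrdConnected.Icc_inclusion_exclusion (hS : S.OrdConnected) {a b c d : α}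
    (hab : a ≤ b) (hbc : b ≤ c) (hcd : c ≤ d) :
    ((if Set.Icc b c ⊆ S then 1 else 0) - (if Set.Icc a c ⊆ S then 1 else 0)
        - (if Set.Icc b d ⊆ S then 1 else 0) + (if Set.Icc a d ⊆ S then 1 else 0) : ℤ) =
      if Set.Icc b c ⊆ S ∧ a ∉ S ∧ d ∉ S then 1 else 0 := by
  have hb_of_ac : a ∈ S → c ∈ S → b ∈ S := fun ha hc => hS.out ha hc ⟨hab, hbc⟩
  have hb_of_ad : a ∈ S → d ∈ S → b ∈ S := fun ha hd => hS.out ha hd ⟨hab, hbc.trans hcd⟩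
  have hc_of_bd : b ∈ S → d ∈ S → c ∈ S := fun hb hd => hS.out hb hd ⟨hbc, hcd⟩
  rw [hS.Icc_subset_iff hbc, hS.Icc_subset_iff (hab.trans hbc),
    hS.Icc_subset_iff (hbc.trans hcd), hS.Icc_subset_iff (hab.trans (hbc.trans hcd))]
  by_cases a ∈ S <;> by_cases b ∈ S <;> by_cases c ∈ S <;> by_cases d ∈ S <;> simp_all

end OrdConnected

theorem StrictMono.le_of_lt_succ {β : Type*} [Preorder β] {t : ℕ → β} (ht : StrictMono t)
    {i k : ℕ} (h : t i < t (k + 1)) : t i ≤ t k :=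
  ht.monotone (Nat.lt_succ_iff.1 (ht.lt_iff_lt.1 h))

namespace Bar

theorem ordConnected_toSet (I : Bar) : I.toSet.OrdConnected := by
  rcases I with ⟨_ | _ | _ | _, a, b⟩ <;> dsimp only [toSet] <;> infer_instance

theorem mem_toSet_of_lt {I : Bar} {x : ℝ} (ha : I.a < x) (hb : x < I.b) : x ∈ I.toSet := by
  rcases I with ⟨_ | _ | _ | _, a, b⟩ <;> simp_all [toSet, le_of_lt]

theorem a_le_of_mem_toSet {I : Bar} {x : ℝ} (hx : x ∈ I.toSet) : I.a ≤ x := by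
  rcases I with ⟨_ | _ | _ | _, a, b⟩ <;> simp_all [toSet, le_of_lt]

theorem le_b_of_mem_toSet {I : Bar} {x : ℝ} (hx : x ∈ I.toSet) : x ≤ I.b := by
  rcases I with ⟨_ | _ | _ | _, a, b⟩ <;> simp_all [toSet, le_of_lt]

theorem mk_oc_eq_iff {t : ℕ → ℝ} (ht : StrictMono t) {N k j : ℕ} (hkj : k < j)
    {t'' t' : ℝ} (h1 : t k < t'') (h2 : t'' < t (k + 1)) (h3 : t j < t')
    (h4 : j = N ∨ t' < t (j + 1)) {I : Bar} (ha : ∃ i, I.a = t i)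
    (hb : ∃ i ≤ N, I.b = t i) :
    (⟨.oc, t k, t j⟩ : Bar) = I ↔
      Set.Icc t'' (t j) ⊆ I.toSet ∧ t k ∉ I.toSet ∧ t' ∉ I.toSet := by
  have h2j : t'' ≤ t j := h2.le.trans (ht.monotone hkj)
  constructor
  · rintro rfl
    simp only [toSet]
    refine ⟨fun x hx => ⟨h1.trans_le hx.1, hx.2⟩, ?_, ?_⟩ <;> simp [h3]
  rintro ⟨hsub, htk, ht'⟩
  have htj : t j ∈ I.toSet := hsub ⟨h2j, le_rfl⟩
  have ha_le : I.a ≤ t k := by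
    obtain ⟨i, hi⟩ := ha
    have h := (a_le_of_mem_toSet (hsub ⟨le_rfl, h2j⟩)).trans_lt h2
    rw [hi] at h ⊢
    exact ht.le_of_lt_succ h
  have ha_eq : I.a = t k := ha_le.antisymm <| not_lt.1 fun h =>
    htk (mem_toSet_of_lt h ((ht hkj).trans_le (le_b_of_mem_toSet htj)))
  have hb_le : I.b ≤ t' := not_lt.1 fun h =>
    ht' (mem_toSet_of_lt (ha_eq ▸ (ht hkj).trans h3) h)
  have hb_eq : I.b = t j := by
    refine le_antisymm ?_ (le_b_of_mem_toSet htj)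
    obtain ⟨i, hiN, hi⟩ := hb
    rw [hi] at hb_le ⊢
    rcases h4 with rfl | h4
    · exact ht.monotone hiN
    · exact ht.le_of_lt_succ (hb_le.trans_lt h4)
  rcases I with ⟨_ | _ | _ | _, a, b⟩ <;> dsimp only at ha_eq hb_eq <;> subst ha_eq hb_eq <;>
    simp_all [toSet]

end Bar

theorem stmt3_general (N : ℕ) (t : ℕ → ℝ) (ht : StrictMono t)
    (B : Multiset Bar) (hB : endpointsIn B t N)
    (k j : ℕ) (hkj : k < j)
    (t'' t' : ℝ) (h1 : t k < t'') (h2 : t'' < t (k + 1))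
    (h3 : t j < t') (h4 : j = N ∨ t' < t (j + 1)) :
    (count (⟨.oc, t k, t j⟩ : Bar) B : ℤ) =
      (icount B t'' (t j) : ℤ) - icount B (t k) (t j) - icount B t'' t'
        + icount B (t k) t' := by
  refine countP_eq_sub_sub_add fun I hI => ?_
  obtain ⟨⟨i, -, ha⟩, hb⟩ := hB I hI
  rw [I.ordConnected_toSet.Icc_inclusion_exclusion h1.le (h2.le.trans (ht.monotone hkj)) h3.le]
  exact if_congr (Bar.mk_oc_eq_iff ht hkj h1 h2 h3 h4 ⟨i, ha⟩ hb) rfl rfl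

theorem stmt3 (N : ℕ) (t : ℕ → ℝ) (ht : StrictMono t)
    (B : Multiset Bar) (hB : endpointsIn B t N)
    (k j : ℕ) (hkj : k < j) (hk1 : k + 1 ≤ N) (hjN : j ≤ N)
    (t'' t' : ℝ) (h1 : t k < t'') (h2 : t'' < t (k + 1))
    (h3 : t j < t') (h4 : j = N ∨ t' < t (j + 1)) :
    (count (⟨.oc, t k, t j⟩ : Bar) B : ℤ) =
      (icount B t'' (t j) : ℤ) - icount B (t k) (t j) - icount B t'' t'
        + icount B (t k) t' :=
  stmt3_general N t ht B hB k j hkj t'' t' h1 h2 h3 h4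
end
end

section
/- With B, critical values, and i(t,t') as above, the number of half-open intervals [t_k, t_j) in B equals i(t_k,t') - i(t_k,t_j) - i(t'',t') + i(t'',t_j) for any t'' with t_{k-1} < t'' < t_k and any t' with t_{j-1} < t' < t_j. -/
open Classical Multiset

noncomputable section

/-!
Every interval is the intersection of an upper ray bounded by its left endpoint and a lower ray
bounded by its right endpoint, so for `x ≤ y` the indicator of `[x, y] ⊆ I` is the product of
the indicators of `x ∈ lowerRay` and `y ∈ upperRay`. The alternating sum of the four indicators
therefore factors as a difference at the left end times a difference at the right end. Because
the endpoints are critical values and `t''`, `t'` lie strictly between consecutive critical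
values, the left difference detects exactly a closed left endpoint at `t k`, and the right one
an open right endpoint at `t j`.
-/

theorem Multiset.countP_eq_sum_map_ite {α R : Type*} [AddCommMonoidWithOne R] (p : α → Prop)
    [DecidablePred p] (s : Multiset α) :
    (s.countP p : R) = (s.map fun x => if p x then (1 : R) else 0).sum := by
  induction s using Multiset.induction_on with
  | empty => simp
  | cons a s ih => by_cases h : p a <;> simp [h, ih, add_comm]

theorem StrictMono.apply_le_of_apply_pred_lt {β : Type*} [Preorder β] {t : ℕ → β}
    (ht : StrictMono t) {j i : ℕ} (h : t (j - 1) < t i) : t j ≤ t i :=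
  ht.monotone (by have := ht.lt_iff_lt.mp h; omega)

namespace Bar

def lowerRay (I : Bar) : Set ℝ :=
  match I.kind with
  | .cc | .co => Set.Ici I.a
  | .oc | .oo => Set.Ioi I.a

def upperRay (I : Bar) : Set ℝ :=
  match I.kind with
  | .cc | .oc => Set.Iic I.b
  | .co | .oo => Set.Iio I.b

theorem toSet_eq_lowerRay_inter_upperRay (I : Bar) : I.toSet = I.lowerRay ∩ I.upperRay := by
  obtain ⟨kind, a, b⟩ := I
  cases kind <;> rfl

theorem Icc_subset_toSet_iff (I : Bar) {x y : ℝ} (hxy : x ≤ y) :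
    Set.Icc x y ⊆ I.toSet ↔ x ∈ I.lowerRay ∧ y ∈ I.upperRay := by
  have hlow : IsUpperSet I.lowerRay := by
    unfold lowerRay; split
    exacts [isUpperSet_Ici _, isUpperSet_Ici _, isUpperSet_Ioi _, isUpperSet_Ioi _]
  have hupp : IsLowerSet I.upperRay := by
    unfold upperRay; split
    exacts [isLowerSet_Iic _, isLowerSet_Iic _, isLowerSet_Iio _, isLowerSet_Iio _]
  rw [toSet_eq_lowerRay_inter_upperRay]
  constructor
  · intro h
    exact ⟨(h (Set.left_mem_Icc.mpr hxy)).1, (h (Set.right_mem_Icc.mpr hxy)).2⟩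
  · rintro ⟨hx, hy⟩ w ⟨hxw, hwy⟩
    exact ⟨hlow hxw hx, hupp hwy hy⟩

theorem ite_mem_lowerRay_sub (I : Bar) {s x : ℝ} (hsx : s < x) (ha : ¬ (s ≤ I.a ∧ I.a < x)) :
    ((if x ∈ I.lowerRay then 1 else 0) - (if s ∈ I.lowerRay then 1 else 0) : ℤ) =
      if I.leftClosed ∧ I.a = x then 1 else 0 := by
  obtain ⟨kind, a, b⟩ := I
  cases kind <;> simp only [lowerRay, leftClosed, Set.mem_Ici, Set.mem_Ioi] at ha ⊢ <;> grind

theorem ite_mem_upperRay_sub (I : Bar) {y z : ℝ} (hyz : y < z) (hb : ¬ (y ≤ I.b ∧ I.b < z)) :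
    ((if y ∈ I.upperRay then 1 else 0) - (if z ∈ I.upperRay then 1 else 0) : ℤ) =
      if I.rightOpen ∧ I.b = z then 1 else 0 := by
  obtain ⟨kind, a, b⟩ := I
  cases kind <;> simp only [upperRay, rightOpen, Set.mem_Iic, Set.mem_Iio] at hb ⊢ <;> grind

theorem mk_co_eq_iff (I : Bar) (x z : ℝ) :
    (⟨.co, x, z⟩ : Bar) = I ↔ (I.leftClosed ∧ I.a = x) ∧ (I.rightOpen ∧ I.b = z) := by
  obtain ⟨kind, a, b⟩ := I
  cases kind <;> simp [leftClosed, rightOpen, eq_comm]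

theorem ite_mk_co_eq (I : Bar) {s x y z : ℝ} (hsx : s < x) (hxy : x ≤ y) (hyz : y < z)
    (ha : ¬ (s ≤ I.a ∧ I.a < x)) (hb : ¬ (y ≤ I.b ∧ I.b < z)) :
    (if (⟨.co, x, z⟩ : Bar) = I then 1 else 0 : ℤ) =
      (if Set.Icc x y ⊆ I.toSet then 1 else 0) - (if Set.Icc x z ⊆ I.toSet then 1 else 0)
        - (if Set.Icc s y ⊆ I.toSet then 1 else 0)
        + (if Set.Icc s z ⊆ I.toSet then 1 else 0) := by
  have boole_and (P Q : Prop) [Decidable P] [Decidable Q] :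
      (if P ∧ Q then (1 : ℤ) else 0) = (if P then 1 else 0) * (if Q then 1 else 0) := by
    rw [ite_zero_mul_ite_zero, mul_one]
  simp only [mk_co_eq_iff]
  rw [boole_and, ← I.ite_mem_lowerRay_sub hsx ha, ← I.ite_mem_upperRay_sub hyz hb]
  simp only [I.Icc_subset_toSet_iff, hxy, hxy.trans hyz.le, hsx.le.trans hxy,
    hsx.le.trans (hxy.trans hyz.le), boole_and]
  ring

end Bar

theorem stmt4_general (N : ℕ) (t : ℕ → ℝ) (ht : StrictMono t)
    (B : Multiset Bar) (hB : endpointsIn B t N)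
    (k j : ℕ) (hkj : k < j)
    (t'' t' : ℝ) (h1 : t'' < t k) (h2 : k = 0 ∨ t (k - 1) < t'')
    (h3 : t (j - 1) < t') (h4 : t' < t j) :
    (count (⟨.co, t k, t j⟩ : Bar) B : ℤ) =
      (icount B (t k) t' : ℤ) - icount B (t k) (t j) - icount B t'' t'
        + icount B t'' (t j) := by
  have hkt' : t k < t' := (ht.monotone (Nat.le_pred_of_lt hkj)).trans_lt h3
  have hleft (i : ℕ) : ¬ (t'' ≤ t i ∧ t i < t k) := by
    rintro ⟨hi, hik⟩
    rcases h2 with rfl | h2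
    · exact (ht.monotone (Nat.zero_le i)).not_gt hik
    · exact (ht.apply_le_of_apply_pred_lt (h2.trans_le hi)).not_gt hik
  have hright (i : ℕ) : ¬ (t' ≤ t i ∧ t i < t j) := fun ⟨hi, hij⟩ =>
    (ht.apply_le_of_apply_pred_lt (h3.trans_le hi)).not_gt hij
  simp only [count, icount, countP_eq_sum_map_ite]
  rw [← sum_map_sub, ← sum_map_sub, ← sum_map_add]
  congr 1
  refine map_congr rfl fun I hI => ?_
  obtain ⟨⟨i, -, hi⟩, ⟨i', -, hi'⟩⟩ := hB I hI
  exact I.ite_mk_co_eq h1 hkt'.le h4 (hi ▸ hleft i) (hi' ▸ hright i')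

theorem stmt4 (N : ℕ) (t : ℕ → ℝ) (ht : StrictMono t)
    (B : Multiset Bar) (hB : endpointsIn B t N)
    (k j : ℕ) (hkj : k < j) (hj1 : 1 ≤ j) (hjN : j ≤ N)
    (t'' t' : ℝ) (h1 : t'' < t k) (h2 : k = 0 ∨ t (k - 1) < t'')
    (h3 : t (j - 1) < t') (h4 : t' < t j) :
    (count (⟨.co, t k, t j⟩ : Bar) B : ℤ) =
      (icount B (t k) t' : ℤ) - icount B (t k) (t j) - icount B t'' t'
        + icount B t'' (t j) :=
  stmt4_general N t ht B hB k j hkj t'' t' h1 h2 h3 h4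
end
end
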